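/- Clipped cells cover the weighted offsets: for all α ≥ 0, the weighted offset P̂^α equals the union over i of the clipped Voronoi cells V_i^α = Vor_{P̂(α)}(p_i) ∩ ball(p_i, min(λ_i, α)). -/
import Mathlib


open Metric Set

/-- Clipped Voronoi cells cover the weighted offsets: for all `α ≥ 0`, the weighted
offset `P̂^α` equals the union of the clipped Voronoi cells
`V_i^α = Vor_{P̂(α)}(p i) ∩ ball(p i, min (λ i) α)`. -/
theorem clipped_cells_cover_offsets
    {d n : ℕ} (hn : 0 < n) (p : ℕ → EuclideanSpace ℝ (Fin d))
    (lam : ℕ → ℝ) (hlampos : ∀ i, i < n → 0 < lam i)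
    (w : ℕ → ℝ → ℝ)
    (hw : ∀ i s, w i s = if s < lam i then 0 else Real.sqrt (s ^ 2 - (lam i) ^ 2))
    (π : ℕ → ℝ → EuclideanSpace ℝ (Fin d) → ℝ)
    (hπ : ∀ i s x, π i s x = Real.sqrt (dist x (p i) ^ 2 + (w i s) ^ 2))
    (α : ℝ) (hα : 0 ≤ α) :
    {x | ∃ i < n, π i α x ≤ α} =
      ⋃ i ∈ Set.Iio n,
        {x | (∀ j < n, π i α x ≤ π j α x) ∧ dist x (p i) ≤ min (lam i) α} := by
  -- key equivalence: π i α x ≤ α ↔ dist x (p i) ≤ min (lam i) α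
  have key : ∀ i, i < n → ∀ x, π i α x ≤ α ↔ dist x (p i) ≤ min (lam i) α := by
    intro i hi x
    have hd : (0:ℝ) ≤ dist x (p i) := dist_nonneg
    rw [hπ, hw]
    by_cases hcase : α < lam i
    · simp only [if_pos hcase]
      have hmin : min (lam i) α = α := min_eq_right hcase.le
      rw [hmin]
      constructor
      · intro h
        have h2 : dist x (p i) ^ 2 + (0:ℝ)^2 ≤ α ^ 2 := by
          have := Real.sqrt_le_sqrt (le_of_eq (Real.sq_sqrt (by positivity)).symm)
          nlinarith [Real.sq_sqrt (show (0:ℝ) ≤ dist x (p i) ^ 2 + 0^2 by positivity),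
            Real.sqrt_nonneg (dist x (p i) ^ 2 + 0^2), h]
        nlinarith
      · intro h
        have : dist x (p i) ^ 2 + (0:ℝ)^2 ≤ α ^ 2 := by nlinarith
        calc Real.sqrt (dist x (p i) ^ 2 + 0^2) ≤ Real.sqrt (α^2) :=
              Real.sqrt_le_sqrt this
          _ = α := Real.sqrt_sq hα
    · push_neg at hcase
      simp only [if_neg (not_lt.mpr hcase)]
      have hlam := (hlampos i hi)
      have hmin : min (lam i) α = lam i := min_eq_left hcase
      rw [hmin]
      have hs : Real.sqrt (α^2 - lam i ^ 2) ^ 2 = α^2 - lam i ^ 2 :=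
        Real.sq_sqrt (by nlinarith)
      rw [hs]
      constructor
      · intro h
        have h2 : dist x (p i) ^ 2 + (α^2 - lam i ^2) ≤ α ^ 2 := by
          nlinarith [Real.sq_sqrt (show (0:ℝ) ≤ dist x (p i) ^ 2 + (α^2 - lam i^2) by nlinarith),
            Real.sqrt_nonneg (dist x (p i) ^ 2 + (α^2 - lam i^2)), h]
        nlinarith
      · intro h
        have h2 : dist x (p i) ^ 2 + (α^2 - lam i ^2) ≤ α ^ 2 := by nlinarith
        calc Real.sqrt (dist x (p i) ^ 2 + (α^2 - lam i ^2)) ≤ Real.sqrt (α^2) :=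
              Real.sqrt_le_sqrt h2
          _ = α := Real.sqrt_sq hα
  ext x
  simp only [Set.mem_setOf_eq, Set.mem_iUnion, Set.mem_Iio, exists_prop]
  constructor
  · rintro ⟨i, hi, hile⟩
    -- pick argmin over range n
    obtain ⟨i0, hi0, hmin⟩ := Finset.exists_min_image (Finset.range n)
      (fun j => π j α x) ⟨i, Finset.mem_range.mpr hi⟩
    rw [Finset.mem_range] at hi0
    refine ⟨i0, hi0, fun j hj => hmin j (Finset.mem_range.mpr hj), ?_⟩
    exact (key i0 hi0 x).mp ((hmin i (Finset.mem_range.mpr hi)).trans hile)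
  · rintro ⟨i, hi, _, hball⟩
    exact ⟨i, hi, (key i hi x).mpr hball⟩
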